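/- Let D be a positive integer, u_i the Racah polynomials defined by the three-term recurrence u_0(λ)=1, u_1(λ)=λ/3, λu_i = b_i u_{i+1} + a_i u_i + c_i u_{i−1}, and θ_j = 3 − 6j(j+1)/(D(D+2)). Then u_i(θ_j) = ₄F₃[−i, i+1, −j, j+1; 1, D+2, −D; 1] for all 0 ≤ i, j ≤ D. -/

import Mathlib

open Polynomial

/-- `a_i = 3i(i+1)/(D(D+2))`. -/
noncomputable def aa (D i : ℕ) : ℝ := 3 * (i : ℝ) * ((i : ℝ) + 1) / ((D : ℝ) * ((D : ℝ) + 2))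

/-- `b_i = 3(D−i)(i+1)(D+i+2)/(D(D+2)(2i+1))`. -/
noncomputable def bb (D i : ℕ) : ℝ :=
  3 * ((D : ℝ) - i) * ((i : ℝ) + 1) * ((D : ℝ) + i + 2) /
    ((D : ℝ) * ((D : ℝ) + 2) * (2 * (i : ℝ) + 1))

/-- `c_i = 3(D−i+1)i(D+i+1)/(D(D+2)(2i+1))`. -/
noncomputable def cc (D i : ℕ) : ℝ :=
  3 * ((D : ℝ) - i + 1) * (i : ℝ) * ((D : ℝ) + i + 1) /
    ((D : ℝ) * ((D : ℝ) + 2) * (2 * (i : ℝ) + 1))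

/-- `θ_i = 3 − 6i(i+1)/(D(D+2))`. -/
noncomputable def theta (D j : ℕ) : ℝ := 3 - 6 * (j : ℝ) * ((j : ℝ) + 1) / ((D : ℝ) * ((D : ℝ) + 2))

/-- Pochhammer symbol `(a)_n`. -/
noncomputable def poch (a : ℝ) (n : ℕ) : ℝ := ∏ k ∈ Finset.range n, (a + k)

/-- The terminating hypergeometric sum `₄F₃[−i, i+1, −j, j+1; 1, D+2, −D; 1]`. -/
noncomputable def F4 (D i j : ℕ) : ℝ :=
  ∑ n ∈ Finset.range (min i j + 1),
    (poch (-(i : ℝ)) n * poch ((i : ℝ) + 1) n * poch (-(j : ℝ)) n * poch ((j : ℝ) + 1) n) /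
      (poch 1 n * poch ((D : ℝ) + 2) n * poch (-(D : ℝ)) n * (n.factorial : ℝ))

/-!
Write `F4 D i j = ∑ₙ ρᵢ(n) ψⱼ(n)` with `ψⱼ(n) = (-j)ₙ (j+1)ₙ` (`pochPair`) and
`ρᵢ(n) = ψᵢ(n) / ((1)ₙ (D+2)ₙ (-D)ₙ n!)` (`racahCoeff`). Because
`ψⱼ(n+1) = ψⱼ(n) (n(n+1) - j(j+1))`, multiplication by `θⱼ` acts on `ψⱼ` as the bidiagonal operator
`θⱼ ψⱼ(n) = θₙ ψⱼ(n) + κ ψⱼ(n+1)`, `κ = 6/(D(D+2))`. Summation by parts moves it onto the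
coefficients, so the three-term recurrence of the `uᵢ` at `θⱼ` reduces to the dual recurrence
`bᵢ ρᵢ₊₁(n) + aᵢ ρᵢ(n) + cᵢ ρᵢ₋₁(n) = θₙ ρᵢ(n) + κ ρᵢ(n-1)`, a rational identity once every
term is expressed through `ψᵢ(n-1)`. Since `bᵢ ≠ 0` for `i < D`, the recurrence determines
`uᵢ₊₁(θⱼ)` and induction on `i` concludes.
-/

open Finset

lemma poch_zero (a : ℝ) : poch a 0 = 1 := by
  simp [poch]

lemma poch_succ (a : ℝ) (n : ℕ) : poch a (n + 1) = poch a n * (a + n) := by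
  simp [poch, prod_range_succ]

lemma poch_pos {a : ℝ} (ha : 0 < a) (n : ℕ) : 0 < poch a n :=
  prod_pos fun k _ => by positivity

lemma poch_neg_natCast_eq_zero {i n : ℕ} (h : i < n) : poch (-(i : ℝ)) n = 0 :=
  prod_eq_zero (mem_range.mpr h) (by simp)

lemma poch_neg_natCast_ne_zero {D n : ℕ} (h : n ≤ D) : poch (-(D : ℝ)) n ≠ 0 :=
  prod_ne_zero_iff.mpr fun k hk => by
    have : (k : ℝ) < D := by exact_mod_cast (mem_range.mp hk).trans_le h
    linarith

noncomputable def pochPair (i n : ℕ) : ℝ := poch (-(i : ℝ)) n * poch ((i : ℝ) + 1) n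

lemma pochPair_zero (i : ℕ) : pochPair i 0 = 1 := by
  simp [pochPair, poch_zero]

lemma pochPair_succ (i n : ℕ) :
    pochPair i (n + 1) = pochPair i n * ((n - i) * (n + i + 1)) := by
  simp only [pochPair, poch_succ]
  ring

lemma pochPair_eq_zero {i n : ℕ} (h : i < n) : pochPair i n = 0 := by
  simp [pochPair, poch_neg_natCast_eq_zero h]

lemma pochPair_succ_succ (i n : ℕ) :
    pochPair (i + 1) (n + 1) = -(pochPair i n * ((n + i + 1) * (n + i + 2))) := by
  induction n with
  | zero => simp only [pochPair_succ, pochPair_zero]; push_cast; ring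
  | succ n ih => rw [pochPair_succ, ih, pochPair_succ]; push_cast; ring

lemma pochPair_succ_eq_pochPair_succ_left (i n : ℕ) :
    pochPair i (n + 1) = -(pochPair (i + 1) n * ((n - i - 1) * (n - i))) := by
  induction n with
  | zero => simp only [pochPair_succ, pochPair_zero]; push_cast; ring
  | succ n ih => rw [pochPair_succ, ih, pochPair_succ]; push_cast; ring

lemma theta_mul_pochPair (D j n : ℕ) :
    theta D j * pochPair j n =
      theta D n * pochPair j n + 6 / (D * (D + 2)) * pochPair j (n + 1) := by
  rw [pochPair_succ, theta, theta]
  ring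

lemma theta_zero (D : ℕ) : theta D 0 = 3 := by
  simp [theta]

lemma bb_add_aa_add_cc {D : ℕ} (hD : D ≠ 0) (i : ℕ) : bb D i + aa D i + cc D i = 3 := by
  have : (D : ℝ) ≠ 0 := by exact_mod_cast hD
  simp only [bb, aa, cc]
  field_simp
  ring

lemma bb_pos {D i : ℕ} (h : i < D) : 0 < bb D i := by
  have hi : 0 < (D : ℝ) - i := sub_pos.mpr (by exact_mod_cast h)
  have hD : (0 : ℝ) < D := by exact_mod_cast h.pos
  unfold bb
  exact div_pos (mul_pos (mul_pos (mul_pos three_pos hi) (by positivity)) (by positivity))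
    (by positivity)

lemma pochPair_three_term {D : ℕ} (hD : D ≠ 0) (i n : ℕ) :
    bb D (i + 1) * pochPair (i + 2) (n + 1) + aa D (i + 1) * pochPair (i + 1) (n + 1) +
        cc D (i + 1) * pochPair i (n + 1) =
      theta D (n + 1) * pochPair (i + 1) (n + 1) +
        6 / (D * (D + 2)) * ((n + 1) ^ 2 * (n + D + 2) * (n - D)) * pochPair (i + 1) n := by
  have : (D : ℝ) ≠ 0 := by exact_mod_cast hD
  rw [pochPair_succ_succ (i + 1), pochPair_succ_eq_pochPair_succ_left i, pochPair_succ (i + 1)]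
  simp only [bb, aa, cc, theta]
  push_cast
  field_simp
  ring

noncomputable def F4Denom (D n : ℕ) : ℝ :=
  poch 1 n * poch ((D : ℝ) + 2) n * poch (-(D : ℝ)) n * n.factorial

lemma F4Denom_succ (D n : ℕ) :
    F4Denom D (n + 1) = F4Denom D n * ((n + 1) ^ 2 * (n + D + 2) * (n - D)) := by
  simp only [F4Denom, poch_succ, Nat.factorial_succ]
  push_cast
  ring

lemma F4Denom_zero (D : ℕ) : F4Denom D 0 = 1 := by
  simp [F4Denom, poch_zero]

lemma F4Denom_ne_zero {D n : ℕ} (h : n ≤ D) : F4Denom D n ≠ 0 := by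
  unfold F4Denom
  have := poch_neg_natCast_ne_zero h
  have := poch_pos one_pos n
  have := poch_pos (a := (D : ℝ) + 2) (by positivity) n
  positivity

noncomputable def racahCoeff (D i n : ℕ) : ℝ := pochPair i n / F4Denom D n

lemma racahCoeff_zero (D i : ℕ) : racahCoeff D i 0 = 1 := by
  rw [racahCoeff, pochPair_zero, F4Denom_zero, div_one]

lemma racahCoeff_eq_zero (D : ℕ) {i n : ℕ} (h : i < n) : racahCoeff D i n = 0 := by
  rw [racahCoeff, pochPair_eq_zero h, zero_div]

lemma racahCoeff_three_term {D : ℕ} (i : ℕ) {n : ℕ} (hn : n + 1 ≤ D) :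
    bb D (i + 1) * racahCoeff D (i + 2) (n + 1) + aa D (i + 1) * racahCoeff D (i + 1) (n + 1) +
        cc D (i + 1) * racahCoeff D i (n + 1) =
      theta D (n + 1) * racahCoeff D (i + 1) (n + 1) +
        6 / (D * (D + 2)) * racahCoeff D (i + 1) n := by
  have hd := F4Denom_ne_zero (D := D) (n := n) (by omega)
  have hD : (D : ℝ) ≠ 0 := by exact_mod_cast (by omega : D ≠ 0)
  have hnD : (n : ℝ) - D ≠ 0 := sub_ne_zero.mpr (by exact_mod_cast (by omega : n ≠ D))
  calc _ = (bb D (i + 1) * pochPair (i + 2) (n + 1) + aa D (i + 1) * pochPair (i + 1) (n + 1) +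
          cc D (i + 1) * pochPair i (n + 1)) / F4Denom D (n + 1) := by
        simp only [racahCoeff]; ring
    _ = _ := by
        rw [pochPair_three_term (by omega) i n, F4Denom_succ, racahCoeff, racahCoeff, F4Denom_succ]
        field_simp

lemma F4_eq_sum_range {D i j N : ℕ} (h : min i j < N) :
    F4 D i j = ∑ n ∈ range N, racahCoeff D i n * pochPair j n := by
  unfold F4
  refine sum_subset (range_subset_range.mpr h) (fun n _ hn => ?_) |>.trans
    (sum_congr rfl fun n _ => by simp only [racahCoeff, pochPair, F4Denom]; ring)
  have : min i j < n := by rw [mem_range, not_lt] at hn; omega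
  rcases min_lt_iff.mp this with hi | hj
  · simp [poch_neg_natCast_eq_zero hi]
  · simp [poch_neg_natCast_eq_zero hj]

theorem mul_sum_range_eq_of_bidiagonal {N : ℕ} {θ κ : ℝ} {lam g h w : ℕ → ℝ}
    (hh : ∀ n, θ * h n = lam n * h n + κ * h (n + 1))
    (hw₀ : w 0 = lam 0 * g 0) (hw : ∀ n < N, w (n + 1) = lam (n + 1) * g (n + 1) + κ * g n)
    (hg : g N = 0) :
    θ * ∑ n ∈ range (N + 1), g n * h n = ∑ n ∈ range (N + 1), w n * h n := by
  have hθ : θ * ∑ n ∈ range (N + 1), g n * h n =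
      ∑ n ∈ range (N + 1), lam n * g n * h n + κ * ∑ n ∈ range (N + 1), g n * h (n + 1) := by
    rw [mul_sum, mul_sum, ← sum_add_distrib]
    exact sum_congr rfl fun n _ => by linear_combination g n * hh n
  rw [hθ, sum_range_succ (fun n => g n * h (n + 1)), hg, zero_mul, add_zero,
    sum_range_succ', sum_range_succ' (fun n => w n * h n), hw₀, mul_sum, add_right_comm,
    ← sum_add_distrib]
  congr 1
  refine sum_congr rfl fun n hn => ?_
  rw [hw n (mem_range.mp hn)]
  ring

lemma theta_mul_F4 {D i : ℕ} (hi : i + 2 ≤ D) (j : ℕ) :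
    theta D j * F4 D (i + 1) j =
      bb D (i + 1) * F4 D (i + 2) j + aa D (i + 1) * F4 D (i + 1) j + cc D (i + 1) * F4 D i j := by
  have hsum : ∀ k ≤ i + 2, F4 D k j = ∑ n ∈ range (i + 3), racahCoeff D k n * pochPair j n :=
    fun k hk => F4_eq_sum_range (by omega)
  rw [hsum i (by omega), hsum (i + 1) (by omega), hsum (i + 2) le_rfl]
  refine (mul_sum_range_eq_of_bidiagonal (N := i + 2) (theta_mul_pochPair D j)
    (w := fun n => bb D (i + 1) * racahCoeff D (i + 2) n + aa D (i + 1) * racahCoeff D (i + 1) n +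
      cc D (i + 1) * racahCoeff D i n) ?_ ?_ (racahCoeff_eq_zero D (Nat.lt_succ_self _))).trans ?_
  · simp only [racahCoeff_zero, mul_one, theta_zero]
    exact bb_add_aa_add_cc (by omega) _
  · exact fun n hn => racahCoeff_three_term i (by omega)
  · simp only [add_mul, sum_add_distrib, mul_sum, mul_assoc]

lemma F4_zero_left (D j : ℕ) : F4 D 0 j = 1 := by
  simp [F4, poch_zero]

lemma F4_one_left {D : ℕ} (hD : D ≠ 0) (j : ℕ) : F4 D 1 j = theta D j / 3 := by
  have : (D : ℝ) ≠ 0 := by exact_mod_cast hD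
  rw [F4_eq_sum_range (N := 2) (by omega)]
  simp only [sum_range_succ, sum_range_zero, racahCoeff, pochPair_zero, pochPair_succ,
    F4Denom_succ, F4Denom_zero, theta]
  push_cast
  field_simp
  ring

theorem u_eval_theta_general (D : ℕ) (u : ℕ → Polynomial ℝ)
    (h0 : u 0 = 1) (h1 : u 1 = Polynomial.C (1 / 3) * Polynomial.X)
    (hrec : ∀ i, 1 ≤ i → i ≤ D - 1 →
      Polynomial.X * u i =
        Polynomial.C (bb D i) * u (i + 1) + Polynomial.C (aa D i) * u i +
          Polynomial.C (cc D i) * u (i - 1)) :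
    ∀ i j, i ≤ D → j ≤ D → (u i).eval (theta D j) = F4 D i j := by
  intro i j hi _
  induction i using Nat.twoStepInduction with
  | zero => rw [h0, eval_one, F4_zero_left]
  | one =>
    rw [h1, eval_mul, eval_C, eval_X, F4_one_left (by omega : D ≠ 0)]
    ring
  | more k ih₀ ih₁ =>
    have hu := congrArg (eval (theta D j)) (hrec (k + 1) (by omega) (by omega))
    simp only [eval_mul, eval_add, eval_C, eval_X, Nat.add_sub_cancel, ih₀ (by omega),
      ih₁ (by omega)] at hu
    apply mul_left_cancel₀ (bb_pos (by omega : k + 1 < D)).ne'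
    linear_combination -hu + theta_mul_F4 hi j

theorem u_eval_theta (D : ℕ) (hD : 0 < D) (u : ℕ → Polynomial ℝ)
    (h0 : u 0 = 1) (h1 : u 1 = Polynomial.C (1 / 3) * Polynomial.X)
    (hrec : ∀ i, 1 ≤ i → i ≤ D - 1 →
      Polynomial.X * u i =
        Polynomial.C (bb D i) * u (i + 1) + Polynomial.C (aa D i) * u i +
          Polynomial.C (cc D i) * u (i - 1)) :
    ∀ i j, i ≤ D → j ≤ D → (u i).eval (theta D j) = F4 D i j :=
  u_eval_theta_general D u h0 h1 hrec
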